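/- Let K be a finite field, n a positive integer, and f : K^n → K^n a map whose dependency graph is acyclic. Then the n-fold iterate f^n is a constant map: there exists x₀ ∈ K^n such that f^n(x) = x₀ for all x ∈ K^n. -/

import Mathlib

/-- The coordinate function `h : K^n → K` depends on variable `x_j`. -/
def DepOnVar {n : ℕ} {K : Type*} (h : (Fin n → K) → K) (j : Fin n) : Prop :=
  ∃ (x : Fin n → K) (p q : K), p ≠ q ∧
    h (Function.update x j p) ≠ h (Function.update x j q)

/-- Edge from `j` to `i` in the dependency graph of `f`. -/
def DepEdge {n : ℕ} {K : Type*} (f : (Fin n → K) → (Fin n → K)) (j i : Fin n) : Prop :=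
  DepOnVar (fun x => f x i) j

/-- The dependency graph of `f` is acyclic (no directed cycles, no self-loops). -/
def DepAcyclic {n : ℕ} {K : Type*} (f : (Fin n → K) → (Fin n → K)) : Prop :=
  ¬ ∃ (m : ℕ) (v : ℕ → Fin n), 1 ≤ m ∧ v 0 = v m ∧
      ∀ t < m, DepEdge f (v t) (v (t + 1))

/-!
The `i`-th coordinate of `f^[k] x` depends only on those coordinates `x j` from which a walk
of length `k` leads to `i` in the dependency graph. A walk of length `n` visits `n + 1`
vertices of an `n`-vertex graph, so it repeats one and contains a cycle; under acyclicity
there are none, and every coordinate of `f^[n]` is constant.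
-/

open Function

section DependencyGraph

variable {n : ℕ} {K : Type*}

lemma not_depOnVar_iff {h : (Fin n → K) → K} {j : Fin n} :
    ¬ DepOnVar h j ↔ ∀ x p, h (update x j p) = h x := by
  refine ⟨fun hd x p => ?_, fun hconst ⟨x, p, q, _, hne⟩ => hne (by rw [hconst, hconst])⟩
  by_contra hne
  exact hd ⟨x, p, x j, fun hp => hne (by rw [hp, update_eq_self]), by rwa [update_eq_self]⟩

lemma dependsOn_setOf_depOnVar (h : (Fin n → K) → K) : DependsOn h {j | DepOnVar h j} := by
  intro x y hxy
  suffices ∀ s : Finset (Fin n), h (s.piecewise y x) = h x by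
    simpa using (this Finset.univ).symm
  intro s
  induction s using Finset.induction_on with
  | empty => simp
  | @insert a s ha ih =>
    rw [Finset.piecewise_insert]
    by_cases hdep : DepOnVar h a
    · rwa [← hxy a hdep, ← Finset.piecewise_eq_of_notMem s y x ha, update_eq_self]
    · rwa [not_depOnVar_iff.1 hdep]

def DepWalk (f : (Fin n → K) → (Fin n → K)) (k : ℕ) (j i : Fin n) : Prop :=
  ∃ v : ℕ → Fin n, v 0 = j ∧ v k = i ∧ ∀ t < k, DepEdge f (v t) (v (t + 1))

section Walks

variable {f : (Fin n → K) → (Fin n → K)}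

lemma depWalk_zero (i : Fin n) : DepWalk f 0 i i :=
  ⟨fun _ => i, rfl, rfl, fun _ ht => absurd ht (Nat.not_lt_zero _)⟩

lemma DepWalk.snoc {k : ℕ} {j i l : Fin n} (hw : DepWalk f k j i) (he : DepEdge f i l) :
    DepWalk f (k + 1) j l := by
  obtain ⟨v, hv0, hvk, hedge⟩ := hw
  refine ⟨update v (k + 1) l, by simpa using hv0, by simp, fun t ht => ?_⟩
  rcases Nat.lt_succ_iff_lt_or_eq.1 ht with ht | rfl
  · rw [update_of_ne (by omega), update_of_ne (by omega)]
    exact hedge t ht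
  · rw [update_of_ne (by omega), update_self, hvk]
    exact he

lemma DepAcyclic.injOn_of_isWalk (hf : DepAcyclic f) {v : ℕ → Fin n} {k : ℕ}
    (hv : ∀ t < k, DepEdge f (v t) (v (t + 1))) : Set.InjOn v (Set.Iic k) := by
  have hne : ∀ a b, a < b → b ≤ k → v a ≠ v b := fun a b hab hb hvab =>
    hf ⟨b - a, fun t => v (a + t), by omega, by simpa [Nat.add_sub_cancel' hab.le] using hvab,
      fun t ht => hv (a + t) (by omega)⟩
  intro a ha b hb hvab
  rcases lt_trichotomy a b with hab | hab | hab
  · exact absurd hvab (hne a b hab hb)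
  · exact hab
  · exact absurd hvab.symm (hne b a hab ha)

lemma DepAcyclic.not_depWalk (hf : DepAcyclic f) {j i : Fin n} : ¬ DepWalk f n j i := by
  rintro ⟨v, -, -, hv⟩
  have hinj : Injective fun t : Fin (n + 1) => v t := fun a b hab =>
    Fin.ext (hf.injOn_of_isWalk hv (Nat.le_of_lt_succ a.2) (Nat.le_of_lt_succ b.2) hab)
  simpa using Fintype.card_le_of_injective _ hinj

end Walks

lemma dependsOn_iterate_apply (f : (Fin n → K) → (Fin n → K)) (k : ℕ) (i : Fin n) :
    DependsOn (fun x => f^[k] x i) {j | DepWalk f k j i} := by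
  induction k generalizing i with
  | zero => exact fun x y hxy => hxy i (depWalk_zero i)
  | succ k ih =>
    intro x y hxy
    simp only [iterate_succ_apply']
    refine dependsOn_setOf_depOnVar (fun z => f z i) fun j hj => ih j fun l hl => ?_
    exact hxy l (hl.snoc hj)

end DependencyGraph

theorem iterate_const_of_acyclic_general {K : Type*} [Field K] {n : ℕ}
    (f : (Fin n → K) → (Fin n → K)) (hf : DepAcyclic f) :
    ∃ x₀ : Fin n → K, ∀ x : Fin n → K, (f^[n]) x = x₀ := by
  refine ⟨f^[n] (fun _ => 0), fun x => funext fun i => ?_⟩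
  have hconst : DependsOn (fun x => f^[n] x i) ∅ :=
    (dependsOn_iterate_apply f n i).mono fun _ hj => hf.not_depWalk hj
  exact hconst.empty x _

/-- If `f : K^n → K^n` has an acyclic dependency graph, then the `n`-fold
iterate `f^n` is a constant map. -/
theorem iterate_const_of_acyclic {K : Type*} [Field K] [Fintype K] {n : ℕ}
    (hn : 0 < n) (f : (Fin n → K) → (Fin n → K)) (hf : DepAcyclic f) :
    ∃ x₀ : Fin n → K, ∀ x : Fin n → K, (f^[n]) x = x₀ :=
  iterate_const_of_acyclic_general f hf
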